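/- Let t ≥ 2 be an integer, λ a partition of length at most nt, and z an integer with −1 ≤ z ≤ t−1. Then t-core(λ) is of the form (a | a+z) in Frobenius notation for some strictly decreasing nonnegative integer sequence a (i.e., t-core(λ) is z-asymmetric) if and only if m_r(λ;nt) + m_{t−r−z−1}(λ;nt) = 2n for all 0 ≤ r ≤ t−z−1 and m_r(λ;nt) = n for all t−z ≤ r ≤ t−1, where the subscripts of m are taken modulo t. -/

import Mathlib

open scoped BigOperators

noncomputable section

/-! ## The ring of symmetric functions and basic operators -/

/-- The ring of symmetric functions `Λ` (with coefficients in `ℚ`, so that the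
half occurring in the definition of `sp_λ` is available), realised as the
polynomial ring in the algebraically independent complete homogeneous symmetric
functions `h₁, h₂, h₃, …`; the variable `n : ℕ` stands for `h_{n+1}`. -/
abbrev SymF : Type := MvPolynomial ℕ ℚ

/-- The complete homogeneous symmetric function `h_r ∈ Λ`, with `h_0 = 1` and
`h_r = 0` for `r < 0`. -/
def hh (r : ℤ) : SymF :=
  if r < 0 then 0 else if r = 0 then 1 else MvPolynomial.X (r.toNat - 1)

/-- The algebra homomorphism `φ_t : Λ → Λ` determined by `φ_t h_r = h_{r/t}`
if `t ∣ r` and `φ_t h_r = 0` otherwise. -/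
def phi (t : ℕ) : SymF →ₐ[ℚ] SymF :=
  MvPolynomial.aeval fun n =>
    if t ∣ (n + 1) then hh (((n + 1) / t : ℕ) : ℤ) else 0

/-- The elementary symmetric function `e_r`, via the Jacobi–Trudi determinant
`e_r = s_{(1^r)} = det_{1 ≤ i,j ≤ r}(h_{1 - i + j})`. -/
def ee (r : ℕ) : SymF :=
  Matrix.det (Matrix.of fun i j : Fin r => hh (1 + (j : ℤ) - (i : ℤ)))

/-- The involution `ω : Λ → Λ`, determined by `ω h_r = e_r`. -/
def omegaSym : SymF →ₐ[ℚ] SymF :=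
  MvPolynomial.aeval fun n => ee (n + 1)

/-- `(-1)^z` for an integer exponent `z`. -/
def msign (z : ℤ) : ℤ := if Even z then 1 else -1

/-! ## Partitions -/

/-- A partition, encoded as a weakly decreasing, eventually zero function
`ℕ → ℕ` (0-indexed: `f i` is the part `λ_{i+1}`). -/
def IsPartition (f : ℕ → ℕ) : Prop :=
  Antitone f ∧ ∃ N, ∀ i, N ≤ i → f i = 0

/-- The length `l(λ)` (number of nonzero parts). -/
def plen (f : ℕ → ℕ) : ℕ := sInf {N | ∀ i, N ≤ i → f i = 0}

/-- Containment `μ ⊆ λ` of partitions. -/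
def SubP (mu lam : ℕ → ℕ) : Prop := ∀ i, mu i ≤ lam i

/-- The conjugate partition `λ'`. -/
def conjP (f : ℕ → ℕ) : ℕ → ℕ := fun j => Set.ncard {i | j < f i}

/-- The Frobenius rank `rk(λ)` (side length of the Durfee square). -/
def rk (f : ℕ → ℕ) : ℕ := Set.ncard {i | i < f i}

/-- The size `|λ|` of a partition. -/
def psize (f : ℕ → ℕ) : ℕ := ∑ i ∈ Finset.range (plen f), f i

/-- `λ` is `z`-asymmetric, i.e. `λ = (a | a + z)` in Frobenius notation, which
amounts to `λ'_i = λ_i + z` for all `1 ≤ i ≤ rk(λ)`.  `(-1)`-asymmetric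
partitions are called orthogonal, `1`-asymmetric ones symplectic, and
`0`-asymmetric ones are exactly the self-conjugate ones. -/
def ZAsymmetric (z : ℤ) (f : ℕ → ℕ) : Prop :=
  ∀ i < rk f, (conjP f i : ℤ) = (f i : ℤ) + z

/-- The one-row partition `(c)`. -/
def rowP (c : ℕ) : ℕ → ℕ := fun i => if i = 0 then c else 0

/-- `λ` is a `t`-core: no box of the Young diagram has hook length `t`
(the hook length of the box `(i,j)` is `λ_i + λ'_j - i - j + 1`, 1-indexed). -/
def IsTCore (t : ℕ) (f : ℕ → ℕ) : Prop :=
  ∀ i j, j < f i → f i + conjP f j ≠ i + j + 1 + t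

/-! ## Schur functions and universal characters via Jacobi–Trudi determinants -/

/-- The Jacobi–Trudi determinant `det_{1 ≤ i,j ≤ n}(h_{λ_i - μ_j - i + j})`. -/
def sSkewN (lam mu : ℕ → ℕ) (n : ℕ) : SymF :=
  Matrix.det (Matrix.of fun i j : Fin n =>
    hh ((lam i : ℤ) - (mu j : ℤ) - (i : ℤ) + (j : ℤ)))

open Classical in
/-- The skew Schur function `s_{λ/μ}`, defined by the Jacobi–Trudi formula
(and `0` if `μ ⊄ λ`). -/
def sSkew (lam mu : ℕ → ℕ) : SymF :=
  if SubP mu lam then sSkewN lam mu (plen lam) else 0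

/-- The Schur function `s_λ`. -/
def sFun (lam : ℕ → ℕ) : SymF := sSkew lam fun _ => 0

/-- The universal orthogonal character
`o_λ = det_{1 ≤ i,j ≤ n}(h_{λ_i - i + j} - h_{λ_i - i - j})`. -/
def oU (lam : ℕ → ℕ) : SymF :=
  Matrix.det (Matrix.of fun i j : Fin (plen lam) =>
    hh ((lam i : ℤ) - (i : ℤ) + (j : ℤ)) -
      hh ((lam i : ℤ) - (i : ℤ) - (j : ℤ) - 2))

/-- The universal symplectic character
`sp_λ = (1/2) · det_{1 ≤ i,j ≤ n}(h_{λ_i - i + j} + h_{λ_i - i - j + 2})`. -/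
def spU (lam : ℕ → ℕ) : SymF :=
  (1 / 2 : ℚ) • Matrix.det (Matrix.of fun i j : Fin (plen lam) =>
    hh ((lam i : ℤ) - (i : ℤ) + (j : ℤ)) +
      hh ((lam i : ℤ) - (i : ℤ) - (j : ℤ)))

/-- The universal odd orthogonal character
`so_λ = det_{1 ≤ i,j ≤ n}(h_{λ_i - i + j} + h_{λ_i - i - j + 1})`. -/
def soU (lam : ℕ → ℕ) : SymF :=
  Matrix.det (Matrix.of fun i j : Fin (plen lam) =>
    hh ((lam i : ℤ) - (i : ℤ) + (j : ℤ)) +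
      hh ((lam i : ℤ) - (i : ℤ) - (j : ℤ) - 1))

/-- The variant `so⁻_λ = det_{1 ≤ i,j ≤ n}(h_{λ_i - i + j} - h_{λ_i - i - j + 1})`. -/
def soMinusU (lam : ℕ → ℕ) : SymF :=
  Matrix.det (Matrix.of fun i j : Fin (plen lam) =>
    hh ((lam i : ℤ) - (i : ℤ) + (j : ℤ)) -
      hh ((lam i : ℤ) - (i : ℤ) - (j : ℤ) - 1))

/-- The rational universal character `rs_{λ,μ}` (one alphabet), via Koike's block
determinant, for weakly decreasing integer sequences `λ`, `μ` of lengths `n`, `m`. -/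
def rsN (n m : ℕ) (lam mu : ℕ → ℤ) : SymF :=
  Matrix.det (Matrix.fromBlocks
    (Matrix.of fun i j : Fin n => hh (lam i - (i : ℤ) + (j : ℤ)))
    (Matrix.of fun (i : Fin n) (j : Fin m) => hh (lam i - (i : ℤ) - (j : ℤ) - 1))
    (Matrix.of fun (i : Fin m) (j : Fin n) => hh (mu i - (i : ℤ) - (j : ℤ) - 1))
    (Matrix.of fun i j : Fin m => hh (mu i - (i : ℤ) + (j : ℤ))))

/-- `rs_{λ,μ}` for partitions `λ`, `μ`. -/
def rsP (lam mu : ℕ → ℕ) : SymF :=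
  rsN (plen lam) (plen mu) (fun i => (lam i : ℤ)) fun i => (mu i : ℤ)

/-! ## Beta sets, cores, quotients and signs -/

/-- The beta set `β(λ; N) = {λ_i + N - i : 1 ≤ i ≤ N}`. -/
def betaSet (lam : ℕ → ℕ) (N : ℕ) : Finset ℕ :=
  (Finset.range N).image fun i => lam i + (N - 1 - i)

/-- `m_r(λ; N)`: the number of elements of `β(λ; N)` congruent to `r` mod `t`. -/
def mr (t : ℕ) (lam : ℕ → ℕ) (N r : ℕ) : ℕ :=
  ((betaSet lam N).filter fun x => x % t = r).card

/-- The `r`-th component `λ^{(r)}` of the `t`-quotient of `λ` (computed, as per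
the convention of the paper, from a beta set whose size is a multiple of `t`):
writing the elements of `β(λ; N)` in residue class `r` as `ξ_k t + r` with
`ξ_1 > ⋯ > ξ_m ≥ 0`, the `k`-th part is `ξ_k - m + k`. -/
def tQuot (t : ℕ) (lam : ℕ → ℕ) (r : ℕ) : ℕ → ℕ := fun k =>
  let N := t * (plen lam + 1)
  let S := (betaSet lam N).filter fun x => x % t = r
  if k < S.card then (S.sort (· ≤ ·)).getD (S.card - 1 - k) 0 / t + (k + 1) - S.card
  else 0

/-- The `t`-core of `λ`: its `i`-th part is `ξ̃_i - N + i` where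
`ξ̃_1 > ⋯ > ξ̃_N` are the integers `k t + r`, `0 ≤ k < m_r(λ; N)`, `0 ≤ r < t`. -/
def tCore (t : ℕ) (lam : ℕ → ℕ) : ℕ → ℕ := fun i =>
  let N := t * (plen lam + 1)
  let T := (Finset.range t).biUnion fun r =>
    (Finset.range (mr t lam N r)).image fun k => k * t + r
  if i < N then (T.sort (· ≤ ·)).getD (N - 1 - i) 0 + (i + 1) - N else 0

/-- The sign of the permutation `w_t(λ; N)` sorting the beta set so that the
residues mod `t` increase and the entries within a residue class decrease,
computed as `(-1)` to the number of inversions: an inversion is a pair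
`x > y` of elements of the beta set with `x mod t > y mod t`. -/
def sgnW (t : ℕ) (lam : ℕ → ℕ) (N : ℕ) : ℤ :=
  (-1) ^ ((betaSet lam N ×ˢ betaSet lam N).filter fun p : ℕ × ℕ =>
    p.2 < p.1 ∧ p.2 % t < p.1 % t).card

/-! ## Ribbons and tileability -/

/-- The cells of the skew shape `λ/μ` (0-indexed rows and columns). -/
def SkewCells (lam mu : ℕ → ℕ) : Set (ℕ × ℕ) := {c | mu c.1 ≤ c.2 ∧ c.2 < lam c.1}

/-- Two cells are adjacent if they share an edge. -/
def CellAdj (c d : ℕ × ℕ) : Prop :=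
  (c.1 = d.1 ∧ (c.2 + 1 = d.2 ∨ d.2 + 1 = c.2)) ∨
    (c.2 = d.2 ∧ (c.1 + 1 = d.1 ∨ d.1 + 1 = c.1))

/-- A set of cells is (edge-)connected. -/
def ConnectedCells (S : Set (ℕ × ℕ)) : Prop :=
  ∀ c ∈ S, ∀ d ∈ S, Relation.ReflTransGen (fun x y => x ∈ S ∧ y ∈ S ∧ CellAdj x y) c d

/-- The set of cells contains a `2 × 2` square. -/
def Has2x2 (S : Set (ℕ × ℕ)) : Prop :=
  ∃ i j, (i, j) ∈ S ∧ (i + 1, j) ∈ S ∧ (i, j + 1) ∈ S ∧ (i + 1, j + 1) ∈ S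

/-- The skew shape `λ/μ` is a `t`-ribbon: connected, `t` cells, no `2 × 2` square. -/
def IsRibbon (t : ℕ) (lam mu : ℕ → ℕ) : Prop :=
  SubP mu lam ∧ (SkewCells lam mu).ncard = t ∧
    ConnectedCells (SkewCells lam mu) ∧ ¬Has2x2 (SkewCells lam mu)

/-- The height of a ribbon `λ/μ`: one less than the number of rows it occupies. -/
def ribbonHeight (lam mu : ℕ → ℕ) : ℕ :=
  (Prod.fst '' SkewCells lam mu).ncard - 1

/-- `ν` (as `ν 0, ν 1, …, ν k`) is a ribbon decomposition of the skew shape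
`λ/μ` into `t`-ribbons: `ν 0 = μ`, `ν k = λ`, every `ν i` is a partition, and
each `ν (i+1) / ν i` is a `t`-ribbon. -/
def IsRibbonDecomp (t : ℕ) (mu lam : ℕ → ℕ) (k : ℕ) (ν : ℕ → ℕ → ℕ) : Prop :=
  ν 0 = mu ∧ ν k = lam ∧ (∀ i ≤ k, IsPartition (ν i)) ∧
    ∀ i < k, IsRibbon t (ν (i + 1)) (ν i)

/-- The height of a ribbon decomposition: the sum of the heights of its ribbons.
The sign `sgn_t(λ/μ)` is `(-1)` to this quantity (for any decomposition). -/
def decompHeight (ν : ℕ → ℕ → ℕ) (k : ℕ) : ℕ :=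
  ∑ i ∈ Finset.range k, ribbonHeight (ν (i + 1)) (ν i)

/-- The skew shape `λ/μ` is tileable by `t`-ribbons. -/
def Tileable (t : ℕ) (mu lam : ℕ → ℕ) : Prop :=
  ∃ k ν, IsRibbonDecomp t mu lam k ν

/-! ## The signs `ε` of Ayyer–Kumari -/

/-- The exponent `ε^o_{λ;nt}`. -/
def epsO (t : ℕ) (lam : ℕ → ℕ) (n : ℕ) : ℕ :=
  (∑ r ∈ Finset.Icc ((t + 2) / 2) (t - 1), Nat.choose (mr t lam (n * t) r + 1) 2)
    + rk (tCore t lam)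
    + if 2 ∣ t then Nat.choose (n + 1) 2 + n * rk (tCore t lam) else 0

/-- The exponent `ε^sp_{λ;nt}`. -/
def epsSp (t : ℕ) (lam : ℕ → ℕ) (n : ℕ) : ℕ :=
  (∑ r ∈ Finset.Icc (t / 2) (t - 2), Nat.choose (mr t lam (n * t) r + 1) 2)
    + if 2 ∣ t then Nat.choose (n + 1) 2 + n * rk (tCore t lam) else 0

/-- The exponent `ε^so_{λ;nt}`. -/
def epsSo (t : ℕ) (lam : ℕ → ℕ) (n : ℕ) : ℕ :=
  (∑ r ∈ Finset.Icc ((t + 1) / 2) (t - 1), Nat.choose (mr t lam (n * t) r + 1) 2)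
    + if 2 ∣ t then 0 else n * rk (tCore t lam)

/-! ## Evaluation at a finite complex alphabet -/

/-- The complete homogeneous polynomial `h_r(y₁,…,y_N)` evaluated at complex
numbers: the sum over all multisets of size `r` of the product of the values. -/
def hEval {N : ℕ} (y : Fin N → ℂ) (r : ℕ) : ℂ :=
  ∑ m ∈ (Finset.univ : Finset (Fin N)).sym r, (Multiset.map y (m : Multiset (Fin N))).prod

/-- Evaluation of a universal symmetric function at the finite alphabet
`y₁, …, y_N` (substituting `h_r ↦ h_r(y)`). -/
def evalSym {N : ℕ} (y : Fin N → ℂ) : SymF →ₐ[ℚ] ℂ :=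
  MvPolynomial.aeval fun n => hEval y (n + 1)

/-- The Schur polynomial `s_λ(y₁,…,y_N)` (equal to the ratio of alternants when
the `y_i` are distinct, and `0` when `l(λ) > N`). -/
def schurC {N : ℕ} (lam : ℕ → ℕ) (y : Fin N → ℂ) : ℂ := evalSym y (sFun lam)

/-- The algebra homomorphism `φ_t^q : Λ → Λ[q]` with
`φ_t^q h_{at+b} = q^b ∑_{k ≥ 0} q^{kt} h_{a-k}` for `a ≥ 0`, `0 ≤ b ≤ t-1`
(the sum is finite since `h_{a-k} = 0` for `k > a`). -/
def phiQ (t : ℕ) : SymF →ₐ[ℚ] Polynomial SymF :=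
  MvPolynomial.aeval fun m =>
    ∑ k ∈ Finset.range ((m + 1) / t + 1),
      Polynomial.C (hh ((((m + 1) / t - k : ℕ)) : ℤ)) *
        Polynomial.X ^ ((m + 1) % t + k * t)


open Finset

/-!
The `t`-core has the beta set `T = {k t + r : k < m_r}` of size `N = t M`: an abacus with
`m_r` beads on runner `r`. For the partition with a beta set `X` of size `N`, the Frobenius
arms are the `x - N` with `x ∈ X`, `x ≥ N`, and the legs are the `N - 1 - y` with `y ∉ X`,
`y < N`. So it is `(a | a + z)` exactly when `y ↦ 2N - 1 - z - y` exchanges the gaps below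
`N` with the beads at or above `N`. This reflection maps runner `r` onto runner
`s ≡ t - r - z - 1 (mod t)`, reversing it, and must carry the gaps at levels `m_r ≤ k < M` of
runner `r` onto the beads at levels `k ≥ M` of runner `s`. For both `r` and `s` this holds iff
`m_r + m_s = 2M`, together with `m_r = M` when the reflection wraps around (for `r ≥ t - z`,
and for `r = 0` when `z = -1`). Finally, `m_r(λ; nt) - n` does not depend on `n`.
-/

section BetaSet

def ofBetaSet (X : Finset ℕ) : ℕ → ℕ := fun i =>
  if i < #X then Nat.nth (· ∈ X) (#X - 1 - i) + (i + 1) - #X else 0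

def mayaDiagram (X : Finset ℕ) : Set ℤ := {y | y < 0 ∨ y.toNat ∈ X}

def ReflectsGaps (N : ℕ) (z : ℤ) (D : Set ℤ) : Prop :=
  ∀ y : ℤ, (y < N ∧ y ∉ D) ↔ ((N : ℤ) ≤ 2 * N - 1 - z - y ∧ 2 * N - 1 - z - y ∈ D)

variable {X : Finset ℕ}

lemma natCast_mem_mayaDiagram (n : ℕ) : (n : ℤ) ∈ mayaDiagram X ↔ n ∈ X := by
  simp [mayaDiagram]

lemma notMem_mayaDiagram {y : ℤ} : y ∉ mayaDiagram X ↔ 0 ≤ y ∧ y.toNat ∉ X := by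
  simp [mayaDiagram]

lemma finite_setOf_mem : (Set.ofPred (· ∈ X)).Finite := X.finite_toSet

lemma toFinset_finite_setOf_mem : (finite_setOf_mem (X := X)).toFinset = X := by
  ext; simp

lemma infinite_setOf_notMem : (Set.ofPred (· ∉ X)).Infinite :=
  X.finite_toSet.infinite_compl

lemma count_mem_add_count_notMem (n : ℕ) :
    Nat.count (· ∈ X) n + Nat.count (· ∉ X) n = n := by
  simp only [Nat.count_eq_card_filter_range]
  rw [card_filter_add_card_filter_not, card_range]

lemma nth_mem_of_lt_card_finset {p : ℕ} (hp : p < #X) : Nat.nth (· ∈ X) p ∈ X :=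
  Nat.nth_mem_of_lt_card finite_setOf_mem (by rwa [toFinset_finite_setOf_mem])

lemma count_nth_mem {p : ℕ} (hp : p < #X) : Nat.count (· ∈ X) (Nat.nth (· ∈ X) p) = p :=
  Nat.count_nth_of_lt_card_finite finite_setOf_mem (by rwa [toFinset_finite_setOf_mem])

lemma le_nth_mem_iff {p : ℕ} (hp : p < #X) (n : ℕ) :
    n ≤ Nat.nth (· ∈ X) p ↔ Nat.count (· ∈ X) n ≤ p := by
  refine ⟨Nat.le_nth_of_count_le (p := (· ∈ X)), fun h => ?_⟩
  by_contra! hlt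
  have := Nat.count_strict_mono (p := (· ∈ X)) (nth_mem_of_lt_card_finset hp) hlt
  rw [count_nth_mem hp] at this
  omega

lemma le_nth_mem_of_lt_count {i : ℕ} (hi : i < Nat.count (· ∉ X) #X) :
    #X ≤ Nat.nth (· ∈ X) (#X - 1 - i) := by
  have := count_mem_add_count_notMem (X := X) #X
  exact (le_nth_mem_iff (by omega) #X).2 (by omega)

lemma count_nth_notMem (j : ℕ) : Nat.count (· ∉ X) (Nat.nth (· ∉ X) j) = j :=
  Nat.count_nth_of_infinite infinite_setOf_notMem j

lemma nth_notMem_notMem (j : ℕ) : Nat.nth (· ∉ X) j ∉ X :=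
  Nat.nth_mem_of_infinite infinite_setOf_notMem j

lemma ofBetaSet_of_lt {i : ℕ} (hi : i < #X) :
    ofBetaSet X i = Nat.count (· ∉ X) (Nat.nth (· ∈ X) (#X - 1 - i)) := by
  have := count_mem_add_count_notMem (X := X) (Nat.nth (· ∈ X) (#X - 1 - i))
  rw [count_nth_mem (by omega)] at this
  rw [ofBetaSet, if_pos hi]
  omega

lemma lt_ofBetaSet_iff (i j : ℕ) :
    j < ofBetaSet X i ↔ i < #X ∧ Nat.count (· ∈ X) (Nat.nth (· ∉ X) j) < #X - i := by
  by_cases hi : i < #X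
  · have hgap : Nat.count (· ∈ X) (Nat.nth (· ∉ X) j + 1) =
        Nat.count (· ∈ X) (Nat.nth (· ∉ X) j) := by
      rw [Nat.count_succ, if_neg (nth_notMem_notMem j), add_zero]
    rw [ofBetaSet_of_lt hi, Nat.lt_nth_iff_count_lt infinite_setOf_notMem, Nat.lt_iff_add_one_le,
      le_nth_mem_iff (by omega), hgap]
    omega
  · simp [ofBetaSet, hi]

lemma rk_ofBetaSet : rk (ofBetaSet X) = Nat.count (· ∉ X) #X := by
  have hsplit := count_mem_add_count_notMem (X := X) #X
  have : {i | i < ofBetaSet X i} = Set.Iio (Nat.count (· ∉ X) #X) := by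
    ext i
    simp only [Set.mem_ofPred_eq, Set.mem_Iio]
    by_cases hi : i < #X
    · have := count_mem_add_count_notMem (X := X) (Nat.nth (· ∈ X) (#X - 1 - i))
      rw [count_nth_mem (by omega)] at this
      have := le_nth_mem_iff (X := X) (p := #X - 1 - i) (by omega) #X
      rw [ofBetaSet_of_lt hi]
      omega
    · simp only [ofBetaSet, hi, if_false]
      omega
  rw [rk, this, ← coe_range, Set.ncard_coe_finset, card_range]

lemma conjP_ofBetaSet (j : ℕ) :
    conjP (ofBetaSet X) j = #X - Nat.count (· ∈ X) (Nat.nth (· ∉ X) j) := by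
  have : {i | j < ofBetaSet X i} = Set.Iio (#X - Nat.count (· ∈ X) (Nat.nth (· ∉ X) j)) := by
    ext i
    simp only [Set.mem_ofPred_eq, Set.mem_Iio, lt_ofBetaSet_iff]
    omega
  rw [conjP, this, ← coe_range, Set.ncard_coe_finset, card_range]

lemma zAsymmetric_ofBetaSet_iff_nth (z : ℤ) :
    ZAsymmetric z (ofBetaSet X) ↔ ∀ i < Nat.count (· ∉ X) #X,
      (Nat.nth (· ∉ X) i : ℤ) = 2 * #X - 1 - z - Nat.nth (· ∈ X) (#X - 1 - i) := by
  rw [ZAsymmetric, rk_ofBetaSet]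
  refine forall₂_congr fun i hi => ?_
  have hsplit := count_mem_add_count_notMem (X := X) #X
  have hgap := count_mem_add_count_notMem (X := X) (Nat.nth (· ∉ X) i)
  rw [count_nth_notMem] at hgap
  have hgN : Nat.nth (· ∉ X) i < #X := Nat.nth_lt_of_lt_count hi
  have hbead := count_mem_add_count_notMem (X := X) (Nat.nth (· ∈ X) (#X - 1 - i))
  rw [count_nth_mem (by omega)] at hbead
  rw [conjP_ofBetaSet, ofBetaSet_of_lt (by omega)]
  omega

lemma nth_notMem_eq_of_reflectsGaps {z : ℤ} (h : ReflectsGaps #X z (mayaDiagram X)) :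
    ∀ i < Nat.count (· ∉ X) #X,
      (Nat.nth (· ∉ X) i : ℤ) = 2 * #X - 1 - z - Nat.nth (· ∈ X) (#X - 1 - i) := by
  have hsplit := count_mem_add_count_notMem (X := X) #X
  set k := Nat.count (· ∉ X) #X with hk
  let B := (range #X).filter (· ∉ X)
  have hB : #B = k := (Nat.count_eq_card_filter_range _ _).symm
  have hreflect : ∀ i < k, 0 ≤ 2 * #X - 1 - z - Nat.nth (· ∈ X) (#X - 1 - i) ∧
      (2 * #X - 1 - z - Nat.nth (· ∈ X) (#X - 1 - i)).toNat ∈ B := by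
    intro i hi
    have hy := (h (2 * #X - 1 - z - Nat.nth (· ∈ X) (#X - 1 - i))).2 (by
      refine ⟨by have := le_nth_mem_of_lt_count hi; omega, ?_⟩
      rw [show (2 * #X - 1 - z - (2 * #X - 1 - z - Nat.nth (· ∈ X) (#X - 1 - i)) : ℤ) =
        Nat.nth (· ∈ X) (#X - 1 - i) by ring, natCast_mem_mayaDiagram]
      exact nth_mem_of_lt_card_finset (by omega))
    rw [notMem_mayaDiagram] at hy
    exact ⟨hy.2.1, mem_filter.2 ⟨mem_range.2 (by omega), hy.2.2⟩⟩
  -- both sides enumerate the gaps below `#X` increasingly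
  have hgaps : (fun i : Fin k => Nat.nth (· ∉ X) i) = B.orderEmbOfFin hB :=
    orderEmbOfFin_unique hB
      (fun i => mem_filter.2 ⟨mem_range.2 (Nat.nth_lt_of_lt_count i.2), nth_notMem_notMem _⟩)
      ((Nat.nth_strictMono infinite_setOf_notMem).comp Fin.val_strictMono)
  have hbeads :
      (fun i : Fin k => (2 * #X - 1 - z - Nat.nth (· ∈ X) (#X - 1 - i)).toNat) =
        B.orderEmbOfFin hB := by
    refine orderEmbOfFin_unique hB (fun i => (hreflect i i.2).2) fun i j hij => ?_
    have : Nat.nth (· ∈ X) (#X - 1 - j) < Nat.nth (· ∈ X) (#X - 1 - i) :=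
      Nat.nth_strictMonoOn finite_setOf_mem
        (by simp only [Set.mem_Iio, toFinset_finite_setOf_mem]; omega)
        (by simp only [Set.mem_Iio, toFinset_finite_setOf_mem]; omega)
        (by simp only [Fin.lt_def] at hij; omega)
    have := (hreflect i i.2).1
    omega
  intro i hi
  have := congrFun (hgaps.trans hbeads.symm) ⟨i, hi⟩
  have := (hreflect i hi).1
  simp only at *
  omega

lemma reflectsGaps_of_nth_notMem_eq {z : ℤ} (h : ∀ i < Nat.count (· ∉ X) #X,
      (Nat.nth (· ∉ X) i : ℤ) = 2 * #X - 1 - z - Nat.nth (· ∈ X) (#X - 1 - i)) :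
    ReflectsGaps #X z (mayaDiagram X) := by
  have hsplit := count_mem_add_count_notMem (X := X) #X
  intro y
  constructor
  · rintro ⟨hyN, hy⟩
    rw [notMem_mayaDiagram] at hy
    obtain ⟨n, rfl⟩ : ∃ n : ℕ, y = n := ⟨y.toNat, (Int.toNat_of_nonneg hy.1).symm⟩
    have hn : n ∉ X := by simpa using hy.2
    have hj : Nat.count (· ∉ X) n < Nat.count (· ∉ X) #X :=
      Nat.count_strict_mono (p := (· ∉ X)) hn (by omega)
    have hgj := h _ hj
    rw [Nat.nth_count (p := (· ∉ X)) hn] at hgj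
    have := le_nth_mem_of_lt_count hj
    refine ⟨by omega, ?_⟩
    rw [show (2 * #X - 1 - z - n : ℤ) = Nat.nth (· ∈ X) (#X - 1 - Nat.count (· ∉ X) n) by
      omega, natCast_mem_mayaDiagram]
    exact nth_mem_of_lt_card_finset (by omega)
  · rintro ⟨hN, hmem⟩
    obtain ⟨u, hu⟩ : ∃ u : ℕ, (u : ℤ) = 2 * #X - 1 - z - y :=
      ⟨_, Int.toNat_of_nonneg (by omega)⟩
    rw [← hu, natCast_mem_mayaDiagram] at hmem
    have hp : Nat.count (· ∈ X) u < #X := by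
      have := Nat.count_lt_card (p := (· ∈ X)) finite_setOf_mem hmem
      rwa [toFinset_finite_setOf_mem] at this
    have hpN : Nat.count (· ∈ X) #X ≤ Nat.count (· ∈ X) u := Nat.count_monotone _ (by omega)
    have hi : #X - 1 - Nat.count (· ∈ X) u < Nat.count (· ∉ X) #X := by omega
    have hgi := h _ hi
    rw [show #X - 1 - (#X - 1 - Nat.count (· ∈ X) u) = Nat.count (· ∈ X) u by omega,
      Nat.nth_count (p := (· ∈ X)) hmem] at hgi
    have hgN := Nat.nth_lt_of_lt_count hi
    refine ⟨by omega, notMem_mayaDiagram.2 ⟨by omega, ?_⟩⟩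
    rw [show y = Nat.nth (· ∉ X) (#X - 1 - Nat.count (· ∈ X) u) by omega, Int.toNat_natCast]
    exact nth_notMem_notMem _

lemma zAsymmetric_ofBetaSet_iff {z : ℤ} :
    ZAsymmetric z (ofBetaSet X) ↔ ReflectsGaps #X z (mayaDiagram X) := by
  rw [zAsymmetric_ofBetaSet_iff_nth]
  exact ⟨reflectsGaps_of_nth_notMem_eq, nth_notMem_eq_of_reflectsGaps⟩

end BetaSet

section Abacus

variable {t : ℕ} {m : ℕ → ℕ}

def abacus (t : ℕ) (m : ℕ → ℕ) : Finset ℕ :=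
  (range t).biUnion fun r => (range (m r)).image fun k => k * t + r

lemma mem_abacus (ht : 0 < t) {x : ℕ} : x ∈ abacus t m ↔ x / t < m (x % t) := by
  simp only [abacus, mem_biUnion, mem_range, mem_image]
  constructor
  · rintro ⟨r, hr, k, hk, rfl⟩
    rwa [add_comm, Nat.add_mul_div_right _ _ ht, Nat.div_eq_of_lt hr, zero_add,
      Nat.add_mul_mod_self_right, Nat.mod_eq_of_lt hr]
  · intro hx
    exact ⟨x % t, Nat.mod_lt x ht, x / t, hx, Nat.div_add_mod' x t⟩

lemma card_abacus (ht : 0 < t) : #(abacus t m) = ∑ r ∈ range t, m r := by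
  rw [abacus, card_biUnion]
  · refine sum_congr rfl fun r _ => ?_
    rw [card_image_of_injective _ fun a b hab => ?_, card_range]
    exact Nat.eq_of_mul_eq_mul_right ht (Nat.add_right_cancel hab)
  · intro r hr r' hr' hne
    simp only [Function.onFun, disjoint_left, mem_image, mem_range, not_exists, not_and]
    rintro _ ⟨k, -, rfl⟩ k' - h
    have := congrArg (· % t) h
    simp only [Nat.mul_add_mod_self_right, Nat.mod_eq_of_lt (mem_range.1 hr),
      Nat.mod_eq_of_lt (mem_range.1 hr')] at this
    exact hne this.symm

lemma mem_mayaDiagram_abacus (ht : 0 < t) {y : ℤ} :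
    y ∈ mayaDiagram (abacus t m) ↔ y / t < m (y % t).toNat := by
  rcases lt_or_ge y 0 with hy | hy
  · have : y / t < 0 := Int.ediv_neg_of_neg_of_pos hy (by exact_mod_cast ht)
    simp only [mayaDiagram, Set.mem_ofPred_eq, hy, true_or, true_iff]
    omega
  · obtain ⟨n, rfl⟩ := Int.eq_ofNat_of_zero_le hy
    rw [natCast_mem_mayaDiagram, mem_abacus ht, ← Int.natCast_ediv, ← Int.natCast_emod,
      Int.toNat_natCast, Nat.cast_lt]

end Abacus

-- Both sides of the inner `↔` are integer intervals, `[a, M)` and `[2M + w - b, M + w)`.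
lemma forall_interval_iff {a b M w : ℤ} :
    (∀ k : ℤ, (a ≤ k ∧ k < M) ↔ (M ≤ 2 * M - 1 - k + w ∧ 2 * M - 1 - k + w < b)) ↔
      (M ≤ a ∧ b ≤ M) ∨ (w = 0 ∧ a + b = 2 * M) := by
  refine ⟨fun h => ?_, fun h k => by omega⟩
  have := h a; have := h (a - 1); have := h (M - 1); have := h M; have := h (M - 1 + w)
  omega

section Runners

variable {t : ℕ} {z : ℤ} {m : ℕ → ℕ} {M : ℕ}

/- The reflection `y ↦ 2tM - 1 - z - y` sends position `k t + r` of the abacus to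
`(2M - 1 - k + runnerShift t z r) t + pairedRunner t z r` (`reflect_ediv_emod`). -/

def pairedRunner (t : ℕ) (z : ℤ) (r : ℕ) : ℕ := (((t : ℤ) - r - z - 1) % t).toNat

def runnerShift (t : ℕ) (z : ℤ) (r : ℕ) : ℤ := ((t : ℤ) - r - z - 1) / t

def CountCondition (t : ℕ) (z : ℤ) (m : ℕ → ℕ) (M : ℕ) : Prop :=
  (∀ r : ℕ, (r : ℤ) ≤ (t : ℤ) - z - 1 → m (r % t) + m (pairedRunner t z r) = 2 * M) ∧
    (∀ r : ℕ, (t : ℤ) - z ≤ (r : ℤ) → r ≤ t - 1 → m r = M)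

lemma pairedRunner_mod (r : ℕ) : pairedRunner t z (r % t) = pairedRunner t z r := by
  have : (t : ℤ) - (r % t : ℕ) - z - 1 = (t - r - z - 1) + t * (r / t : ℕ) := by
    have h : ((r % t : ℕ) : ℤ) + t * (r / t : ℕ) = r := by exact_mod_cast Nat.mod_add_div r t
    linear_combination -h
  rw [pairedRunner, pairedRunner, this, Int.add_mul_emod_self_left]

variable (ht : 0 < t)
include ht

lemma natCast_pairedRunner (r : ℕ) :
    (pairedRunner t z r : ℤ) = ((t : ℤ) - r - z - 1) % t :=
  Int.toNat_of_nonneg (Int.emod_nonneg _ (by omega))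

lemma pairedRunner_lt (r : ℕ) : pairedRunner t z r < t := by
  have := Int.emod_lt_of_pos ((t : ℤ) - r - z - 1) (by omega : (0 : ℤ) < t)
  have := natCast_pairedRunner (z := z) ht r
  omega

lemma pairedRunner_add_runnerShift (r : ℕ) :
    (pairedRunner t z r : ℤ) + t * runnerShift t z r = t - r - z - 1 := by
  rw [natCast_pairedRunner ht, runnerShift, Int.emod_add_mul_ediv]

lemma pairedRunner_pairedRunner {r : ℕ} (hr : r < t) :
    pairedRunner t z (pairedRunner t z r) = r ∧
      runnerShift t z (pairedRunner t z r) = runnerShift t z r := by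
  have hdecomp := pairedRunner_add_runnerShift (z := z) ht r
  have := (Int.ediv_emod_unique (a := (t : ℤ) - pairedRunner t z r - z - 1) (b := t) (r := r)
    (q := runnerShift t z r) (by omega)).2 ⟨by linarith, by omega, by omega⟩
  exact ⟨by rw [pairedRunner, this.2, Int.toNat_natCast], this.1⟩

lemma reflect_ediv_emod (k : ℤ) (r : ℕ) :
    (2 * ((t * M : ℕ) : ℤ) - 1 - z - (k * t + r)) / t = 2 * M - 1 - k + runnerShift t z r ∧
      (2 * ((t * M : ℕ) : ℤ) - 1 - z - (k * t + r)) % t = pairedRunner t z r := by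
  have hdecomp := pairedRunner_add_runnerShift (z := z) ht r
  have := pairedRunner_lt (z := z) ht r
  refine (Int.ediv_emod_unique (by omega)).2 ⟨?_, by omega, by omega⟩
  push_cast
  linear_combination hdecomp

lemma reflectsGaps_abacus_iff :
    ReflectsGaps (t * M) z (mayaDiagram (abacus t m)) ↔ ∀ r < t, ∀ k : ℤ,
      ((m r : ℤ) ≤ k ∧ k < M) ↔ ((M : ℤ) ≤ 2 * M - 1 - k + runnerShift t z r ∧
        2 * M - 1 - k + runnerShift t z r < m (pairedRunner t z r)) := by
  have htz : (0 : ℤ) < t := by omega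
  have hN : ((t * M : ℕ) : ℤ) = M * t := by push_cast; ring
  have key : ∀ (k : ℤ) (r : ℕ), r < t →
      (((k * t + r < ((t * M : ℕ) : ℤ) ∧ k * t + r ∉ mayaDiagram (abacus t m)) ↔
        ((t * M : ℕ) : ℤ) ≤ 2 * ((t * M : ℕ) : ℤ) - 1 - z - (k * t + r) ∧
          2 * ((t * M : ℕ) : ℤ) - 1 - z - (k * t + r) ∈ mayaDiagram (abacus t m)) ↔
      (((m r : ℤ) ≤ k ∧ k < M) ↔ ((M : ℤ) ≤ 2 * M - 1 - k + runnerShift t z r ∧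
        2 * M - 1 - k + runnerShift t z r < m (pairedRunner t z r)))) := by
    intro k r hr
    obtain ⟨hdiv, hmod⟩ : (k * t + r) / t = k ∧ (k * t + r) % t = r :=
      (Int.ediv_emod_unique htz).2 ⟨by ring, by omega, by omega⟩
    obtain ⟨hdiv', hmod'⟩ := reflect_ediv_emod (z := z) (M := M) ht k r
    rw [mem_mayaDiagram_abacus ht, mem_mayaDiagram_abacus ht, hmod, hmod', Int.toNat_natCast,
      Int.toNat_natCast, hdiv', hN, ← Int.ediv_lt_iff_lt_mul htz, hdiv,
      ← Int.le_ediv_iff_mul_le htz, ← hN, hdiv', not_lt, and_comm]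
  refine ⟨fun h r hr k => (key k r hr).1 (h _), fun h y => ?_⟩
  have hr : (y % t).toNat < t := by
    have := Int.emod_lt_of_pos y htz
    omega
  have hy : y = y / t * t + ((y % t).toNat : ℤ) := by
    rw [Int.toNat_of_nonneg (Int.emod_nonneg y htz.ne'), Int.ediv_mul_add_emod]
  rw [hy]
  exact (key _ _ hr).2 (h _ hr _)

lemma countCondition_of_add_eq {m' : ℕ → ℕ} {M' : ℕ} (h : ∀ r < t, m r + M' = m' r + M)
    (hm : CountCondition t z m M) : CountCondition t z m' M' := by
  refine ⟨fun r hr => ?_, fun r hr1 hr2 => ?_⟩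
  · have := hm.1 r hr
    have := h _ (Nat.mod_lt r ht)
    have := h _ (pairedRunner_lt (z := z) ht r)
    omega
  · have := hm.2 r hr1 hr2
    have := h r (by omega)
    omega

variable (hz1 : -1 ≤ z) (hz2 : z ≤ (t : ℤ) - 1)
include hz1 hz2

lemma runnerShift_cases {r : ℕ} (hr : r < t) :
    runnerShift t z r = -1 ∨ runnerShift t z r = 0 ∨ runnerShift t z r = 1 := by
  have hdecomp := pairedRunner_add_runnerShift (z := z) ht r
  have := pairedRunner_lt (z := z) ht r
  have : -1 ≤ runnerShift t z r := by nlinarith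
  have : runnerShift t z r ≤ 1 := by nlinarith
  omega

lemma countCondition_iff :
    CountCondition t z m M ↔ ∀ r < t,
      ((M : ℤ) ≤ m r ∧ (m (pairedRunner t z r) : ℤ) ≤ M) ∨
        (runnerShift t z r = 0 ∧ (m r : ℤ) + m (pairedRunner t z r) = 2 * M) := by
  constructor
  · rintro ⟨hsum, hfix⟩ r hr
    have hdecomp := pairedRunner_add_runnerShift (z := z) ht r
    have hs := pairedRunner_lt (z := z) ht r
    have hdecomp' := pairedRunner_add_runnerShift (z := z) ht (pairedRunner t z r)
    rw [(pairedRunner_pairedRunner ht hr).1, (pairedRunner_pairedRunner ht hr).2] at hdecomp'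
    rcases runnerShift_cases ht hz1 hz2 hr with hw | hw | hw <;> rw [hw] at hdecomp hdecomp'
    · have := hfix r (by omega) (by omega)
      have := hfix (pairedRunner t z r) (by omega) (by omega)
      omega
    · have := hsum r (by omega)
      rw [Nat.mod_eq_of_lt hr] at this
      omega
    · obtain ⟨rfl, rfl⟩ : r = 0 ∧ z = -1 := by omega
      have hs0 : pairedRunner t (-1) 0 = 0 := by omega
      have := hsum 0 (by omega)
      simp only [Nat.zero_mod, hs0] at this ⊢
      omega
  · intro h
    refine ⟨fun r hr => ?_, fun r hr1 hr2 => ?_⟩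
    · have hrt := Nat.mod_lt r ht
      have := h _ hrt
      have := h _ (pairedRunner_lt (z := z) ht (r % t))
      rw [(pairedRunner_pairedRunner ht hrt).1] at this
      rw [← pairedRunner_mod]
      omega
    · have hrt : r < t := by omega
      have hdecomp := pairedRunner_add_runnerShift (z := z) ht r
      have := h r hrt
      have := h (pairedRunner t z r) (pairedRunner_lt ht r)
      rw [(pairedRunner_pairedRunner ht hrt).1, (pairedRunner_pairedRunner ht hrt).2] at this
      rcases runnerShift_cases ht hz1 hz2 hrt with hw | hw | hw <;> rw [hw] at hdecomp <;> omega

end Runners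

section BetaSetOfPartition

variable {lam : ℕ → ℕ} {t : ℕ}

lemma eq_zero_of_plen_le (hlam : IsPartition lam) {i : ℕ} (hi : plen lam ≤ i) : lam i = 0 :=
  Nat.sInf_mem (s := {N | ∀ i, N ≤ i → lam i = 0}) hlam.2 i hi

lemma card_betaSet (hlam : IsPartition lam) (N : ℕ) : #(betaSet lam N) = N := by
  rw [betaSet, card_image_of_injOn, card_range]
  intro i hi j hj hij
  simp only [coe_range, Set.mem_Iio] at hi hj hij
  rcases lt_trichotomy i j with h | h | h
  · have := hlam.1 h.le; omega
  · exact h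
  · have := hlam.1 h.le; omega

lemma sum_mr (hlam : IsPartition lam) (ht : 0 < t) (N : ℕ) :
    ∑ r ∈ range t, mr t lam N r = N := by
  conv_rhs => rw [← card_betaSet hlam N,
    card_eq_sum_card_fiberwise fun x _ => mem_range.2 (Nat.mod_lt x ht)]
  rfl

lemma card_abacus_mr (hlam : IsPartition lam) (ht : 0 < t) (N : ℕ) :
    #(abacus t (mr t lam N)) = N := by
  rw [card_abacus ht, sum_mr hlam ht]

lemma tCore_eq_ofBetaSet (hlam : IsPartition lam) (ht : 0 < t) :
    tCore t lam = ofBetaSet (abacus t (mr t lam (t * (plen lam + 1)))) := by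
  funext i
  rw [ofBetaSet, card_abacus_mr hlam ht, Nat.nth_eq_getD_sort finite_setOf_mem,
    toFinset_finite_setOf_mem]
  rfl

lemma betaSet_add (hlam : IsPartition lam) {N : ℕ} (hN : plen lam ≤ N) (c : ℕ) :
    betaSet lam (N + c) = (betaSet lam N).image (· + c) ∪ range c := by
  ext x
  simp only [betaSet, mem_union, mem_image, mem_range, exists_exists_and_eq_and]
  constructor
  · rintro ⟨i, hi, rfl⟩
    by_cases h : i < N
    · exact Or.inl ⟨i, h, by omega⟩
    · have := eq_zero_of_plen_le hlam (i := i) (by omega)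
      omega
  · rintro (⟨i, hi, rfl⟩ | hx)
    · exact ⟨i, by omega, by omega⟩
    · refine ⟨N + c - 1 - x, by omega, ?_⟩
      have := eq_zero_of_plen_le hlam (i := N + c - 1 - x) (by omega)
      omega

lemma mr_add_mul (hlam : IsPartition lam) (ht : 0 < t) {N r : ℕ} (hN : plen lam ≤ N)
    (hr : r < t) (b : ℕ) : mr t lam (N + b * t) r = mr t lam N r + b := by
  have hres : #((range (b * t)).filter (· % t = r)) = b := by
    have := Nat.count_modEq_card (b := b * t) ht r
    rw [Nat.mul_div_cancel _ ht, Nat.mul_mod_left, if_neg (Nat.not_lt_zero _), add_zero,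
      Nat.count_eq_card_filter_range] at this
    refine (congrArg card (filter_congr fun x _ => ?_)).trans this
    rw [Nat.ModEq, Nat.mod_eq_of_lt hr]
  rw [mr, betaSet_add hlam hN, filter_union, card_union_of_disjoint, filter_image,
    card_image_of_injective _ (add_left_injective _), hres]
  · congr 2
    exact filter_congr fun x _ => by rw [Nat.add_mul_mod_self_right]
  · simp only [disjoint_left, mem_image, mem_filter, mem_range]
    rintro _ ⟨x, -, rfl⟩ ⟨h, -⟩
    omega

lemma mr_mul_add_eq (hlam : IsPartition lam) (ht : 0 < t) {a b r : ℕ} (ha : plen lam ≤ a * t)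
    (hb : plen lam ≤ b * t) (hr : r < t) : mr t lam (a * t) r + b = mr t lam (b * t) r + a := by
  rcases le_total a b with h | h
  · rw [show b * t = a * t + (b - a) * t by rw [← add_mul, Nat.add_sub_cancel' h],
      mr_add_mul hlam ht ha hr]
    omega
  · rw [show a * t = b * t + (a - b) * t by rw [← add_mul, Nat.add_sub_cancel' h],
      mr_add_mul hlam ht hb hr]
    omega

end BetaSetOfPartition

theorem zasymmetric_core_iff_general (t n : ℕ) (ht : 2 ≤ t) (z : ℤ)
    (hz1 : -1 ≤ z) (hz2 : z ≤ (t : ℤ) - 1) (lam : ℕ → ℕ)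
    (hlam : IsPartition lam) (hlen : plen lam ≤ n * t) :
    ZAsymmetric z (tCore t lam) ↔
      ((∀ r : ℕ, (r : ℤ) ≤ (t : ℤ) - z - 1 →
          mr t lam (n * t) (r % t) +
            mr t lam (n * t) ((((t : ℤ) - r - z - 1) % t).toNat) = 2 * n) ∧
        (∀ r : ℕ, (t : ℤ) - z ≤ (r : ℤ) → r ≤ t - 1 →
          mr t lam (n * t) r = n)) := by
  have ht0 : 0 < t := by omega
  have hM : plen lam ≤ (plen lam + 1) * t := by nlinarith
  rw [tCore_eq_ofBetaSet hlam ht0, zAsymmetric_ofBetaSet_iff, card_abacus_mr hlam ht0,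
    reflectsGaps_abacus_iff ht0]
  simp only [forall_interval_iff]
  rw [← countCondition_iff ht0 hz1 hz2, mul_comm t]
  have hcounts := fun r (hr : r < t) => mr_mul_add_eq hlam ht0 hM hlen hr
  exact ⟨countCondition_of_add_eq ht0 hcounts,
    countCondition_of_add_eq ht0 fun r hr => (hcounts r hr).symm⟩

/-- **Lemma (Ayyer–Kumari).** For `λ` of length at most `nt` and `-1 ≤ z ≤ t-1`,
the `t`-core of `λ` is `z`-asymmetric if and only if
`m_r(λ;nt) + m_{t-r-z-1}(λ;nt) = 2n` for `0 ≤ r ≤ t-z-1` and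
`m_r(λ;nt) = n` for `t-z ≤ r ≤ t-1`, indices taken modulo `t`. -/
theorem zasymmetric_core_iff (t n : ℕ) (ht : 2 ≤ t) (hn : 0 < n) (z : ℤ)
    (hz1 : -1 ≤ z) (hz2 : z ≤ (t : ℤ) - 1) (lam : ℕ → ℕ)
    (hlam : IsPartition lam) (hlen : plen lam ≤ n * t) :
    ZAsymmetric z (tCore t lam) ↔
      ((∀ r : ℕ, (r : ℤ) ≤ (t : ℤ) - z - 1 →
          mr t lam (n * t) (r % t) +
            mr t lam (n * t) ((((t : ℤ) - r - z - 1) % t).toNat) = 2 * n) ∧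
        (∀ r : ℕ, (t : ℤ) - z ≤ (r : ℤ) → r ≤ t - 1 →
          mr t lam (n * t) r = n)) :=
  zasymmetric_core_iff_general t n ht z hz1 hz2 lam hlam hlen

end
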